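/- arXiv:1302.1695 — 2 statements merged into one kernel-verified Lean document; each statement's English description precedes it below -/
import Mathlib

section
/- Hurwitz's theorem in one complex variable for zero-free functions: if a sequence of holomorphic functions f_n on a connected open set U ⊆ ℂ, each nowhere zero on U, converges locally uniformly to a holomorphic function f, then either f is nowhere zero on U or f is identically zero on U. -/
/-!
If `f` does not vanish identically on `U`, its zeros are isolated, so every `z₀ ∈ U` is the
centre of a small circle on which `|f| ≥ m > 0`. Uniform convergence gives `|F n| ≥ m / 2` on that
circle for large `n`, and the maximum modulus principle applied to the holomorphic function
`1 / F n` pushes this bound inside the disc, to `|F n z₀| ≥ m / 2`. In the limit,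
`|f z₀| ≥ m / 2 > 0`.
-/

open Set Filter Topology Metric Bornology

namespace Complex

variable {E : Type*} [NormedAddCommGroup E] [NormedSpace ℂ E] [Nontrivial E]

theorem le_norm_of_forall_mem_frontier_le_norm {g : E → ℂ} {V : Set E} (hV : IsBounded V)
    (hg : DiffContOnCl ℂ g V) (hg₀ : ∀ z ∈ closure V, g z ≠ 0) {c : ℝ}
    (hc : ∀ z ∈ frontier V, c ≤ ‖g z‖) {z : E} (hz : z ∈ closure V) : c ≤ ‖g z‖ := by
  rcases le_or_gt c 0 with hc₀ | hc₀
  · exact hc₀.trans (norm_nonneg _)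
  have hinv : DiffContOnCl ℂ (fun w => (g w)⁻¹) V :=
    ⟨hg.differentiableOn.inv fun w hw => hg₀ w (subset_closure hw), hg.continuousOn.inv₀ hg₀⟩
  have hbound : ∀ w ∈ frontier V, ‖(g w)⁻¹‖ ≤ c⁻¹ := fun w hw => by
    rw [norm_inv]
    exact inv_anti₀ hc₀ (hc w hw)
  have := norm_le_of_forall_mem_frontier_norm_le hV hinv hbound hz
  rwa [norm_inv, inv_le_inv₀ (norm_pos_iff.mpr (hg₀ z hz)) hc₀] at this

end Complex

theorem TendstoUniformlyOn.eventually_forall_le_norm {ι α E : Type*} [SeminormedAddCommGroup E]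
    {F : ι → α → E} {f : α → E} {p : Filter ι} {K : Set α} (h : TendstoUniformlyOn F f p K)
    {m c : ℝ} (hf : ∀ z ∈ K, m ≤ ‖f z‖) (hc : c < m) : ∀ᶠ n in p, ∀ z ∈ K, c ≤ ‖F n z‖ := by
  filter_upwards [Metric.tendstoUniformlyOn_iff.mp h (m - c) (sub_pos.mpr hc)] with n hn z hz
  have := norm_sub_norm_le (f z) (F n z)
  rw [← dist_eq_norm] at this
  linarith [hn z hz, hf z hz]

theorem Metric.exists_closedBall_subset_sphere_subset {α : Type*} [PseudoMetricSpace α] {x : α}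
    {U s : Set α} (hU : U ∈ 𝓝 x) (hs : s ∈ 𝓝[≠] x) :
    ∃ r > 0, closedBall x r ⊆ U ∧ sphere x r ⊆ s := by
  obtain ⟨ε, hε, hεs⟩ := mem_nhdsWithin_iff.mp hs
  obtain ⟨δ, hδ, hδU⟩ := mem_nhds_iff.mp hU
  have hε' : min ε δ / 2 < ε := by linarith [min_le_left ε δ, lt_min hε hδ]
  have hδ' : min ε δ / 2 < δ := by linarith [min_le_right ε δ, lt_min hε hδ]
  refine ⟨min ε δ / 2, by positivity, (closedBall_subset_ball hδ').trans hδU, fun z hz => ?_⟩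
  exact hεs ⟨sphere_subset_ball hε' hz, ne_of_mem_sphere hz (by positivity)⟩

theorem ne_zero_of_tendstoUniformlyOn_frontier {ι E : Type*} [NormedAddCommGroup E]
    [NormedSpace ℂ E] [Nontrivial E] [ProperSpace E] {F : ι → E → ℂ} {f : E → ℂ} {p : Filter ι}
    [p.NeBot] {V : Set E} (hV : IsBounded V) (hF : ∀ n, DiffContOnCl ℂ (F n) V)
    (hF₀ : ∀ n, ∀ z ∈ closure V, F n z ≠ 0) (hf : ContinuousOn f (frontier V))
    (hf₀ : ∀ z ∈ frontier V, f z ≠ 0) (hconv : TendstoUniformlyOn F f p (frontier V)) {z₀ : E}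
    (hz₀ : z₀ ∈ closure V) (hlim : Tendsto (fun n => F n z₀) p (𝓝 (f z₀))) : f z₀ ≠ 0 := by
  have hK : IsCompact (frontier V) :=
    hV.isCompact_closure.of_isClosed_subset isClosed_frontier frontier_subset_closure
  obtain ⟨m, hm, hfm⟩ := hK.exists_forall_le' (continuous_norm.comp_continuousOn hf) (a := 0)
    fun z hz => norm_pos_iff.mpr (hf₀ z hz)
  have hFm : ∀ᶠ n in p, m / 2 ≤ ‖F n z₀‖ := by
    filter_upwards [hconv.eventually_forall_le_norm hfm (half_lt_self hm)] with n hn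
    exact Complex.le_norm_of_forall_mem_frontier_le_norm hV (hF n) (hF₀ n) hn hz₀
  exact norm_pos_iff.mp ((half_pos hm).trans_le (ge_of_tendsto hlim.norm hFm))

theorem hurwitz_zero_free (U : Set ℂ) (hU : IsOpen U) (hUc : IsPreconnected U)
    (F : ℕ → ℂ → ℂ) (f : ℂ → ℂ)
    (hF : ∀ n, DifferentiableOn ℂ (F n) U)
    (hFz : ∀ n, ∀ z ∈ U, F n z ≠ 0)
    (hf : DifferentiableOn ℂ f U)
    (hconv : TendstoLocallyUniformlyOn F f Filter.atTop U) :
    (∀ z ∈ U, f z ≠ 0) ∨ (∀ z ∈ U, f z = 0) := by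
  by_cases hzero : ∀ z ∈ U, f z = 0
  · exact Or.inr hzero
  refine Or.inl fun z₀ hz₀ => ?_
  have hiso : ∀ᶠ z in 𝓝[≠] z₀, f z ≠ 0 := not_frequently.mp fun h =>
    hzero ((hf.analyticOnNhd hU).eqOn_zero_of_preconnected_of_frequently_eq_zero hUc hz₀ h)
  obtain ⟨r, hr, hball, hsphere⟩ := exists_closedBall_subset_sphere_subset (hU.mem_nhds hz₀) hiso
  have hconv' : TendstoUniformlyOn F f atTop (closedBall z₀ r) :=
    (tendstoLocallyUniformlyOn_iff_forall_isCompact hU).mp hconv _ hball (isCompact_closedBall z₀ r)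
  refine ne_zero_of_tendstoUniformlyOn_frontier isBounded_ball
    (fun n => (hF n).diffContOnCl_ball hball) ?_ ?_ ?_ ?_ (subset_closure (mem_ball_self hr))
    (hconv.tendsto_at hz₀) <;>
    simp only [closure_ball z₀ hr.ne', frontier_ball z₀ hr.ne']
  · exact fun n z hz => hFz n z (hball hz)
  · exact hf.continuousOn.mono (sphere_subset_closedBall.trans hball)
  · exact hsphere
  · exact hconv'.mono sphere_subset_closedBall
end

section
/- Montel's theorem: a family of holomorphic functions on an open set Ω ⊆ ℂ that is uniformly bounded on each compact subset of Ω is a normal family, i.e., every sequence has a subsequence converging locally uniformly on Ω to a holomorphic function. -/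
/-!
A uniform bound on a disc makes every member of the family Lipschitz at the centre with a common
constant (Schwarz lemma), so the family is equicontinuous on Ω. By Arzelà–Ascoli its closure is
compact for uniform convergence on compact subsets of Ω; a compact exhaustion of Ω makes this
topology metrizable, so compactness yields a convergent subsequence. Locally uniform limits of
holomorphic functions are holomorphic.
-/

open Set Filter Metric Topology Uniformity

theorem Complex.equicontinuousAt_of_differentiableOn_ball_of_norm_le {ι E : Type*}
    [NormedAddCommGroup E] [NormedSpace ℂ E]
    {F : ι → ℂ → E} {c : ℂ} {R M : ℝ} (hR : 0 < R)
    (hF : ∀ i, DifferentiableOn ℂ (F i) (ball c R)) (hM : ∀ i, ∀ z ∈ ball c R, ‖F i z‖ ≤ M) :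
    EquicontinuousAt F c := by
  have hlip : ∀ i, ∀ z ∈ ball c R, dist (F i z) (F i c) ≤ 2 * M / R * dist z c := fun i z hz =>
    Complex.dist_le_div_mul_dist_of_mapsTo_ball (hF i) (fun w hw => mem_closedBall.2 <| by
      calc dist (F i w) (F i c) ≤ ‖F i w‖ + ‖F i c‖ := dist_le_norm_add_norm _ _
        _ ≤ 2 * M := by linarith [hM i w hw, hM i c (mem_ball_self hR)]) hz
  refine Metric.equicontinuousAt_of_continuity_modulus (fun z => 2 * M / R * dist z c) ?_ F ?_
  · simpa using ((continuous_id.dist (continuous_const (y := c))).tendsto c).const_mul (2 * M / R)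
  · filter_upwards [ball_mem_nhds c hR] with z hz i
    rw [dist_comm]
    exact hlip i z hz

theorem IsOpen.exists_monotone_compact_exhaustion {X : Type*} [TopologicalSpace X]
    [LocallyCompactSpace X] [SecondCountableTopology X] {U : Set X} (hU : IsOpen U) :
    ∃ t : ℕ → Set X, Monotone t ∧ (∀ n, IsCompact (t n) ∧ t n ⊆ U) ∧
      ∀ K ⊆ U, IsCompact K → ∃ n, K ⊆ t n := by
  have := hU.locallyCompactSpace
  let E := CompactExhaustion.choice U
  refine ⟨fun n => (↑) '' E n, fun m n h => image_mono (E.subset h),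
    fun n => ⟨(E.isCompact n).image continuous_subtype_val, Subtype.coe_image_subset U _⟩,
    fun K hKU hK => ?_⟩
  have hK' : IsCompact ((↑) ⁻¹' K : Set U) := by
    rwa [Subtype.isCompact_iff, Subtype.image_preimage_coe, inter_eq_right.2 hKU]
  obtain ⟨n, hn⟩ := E.exists_superset_of_isCompact hK'
  exact ⟨n, fun x hx => ⟨⟨x, hKU hx⟩, hn hx, rfl⟩⟩

theorem exists_subseq_tendstoLocallyUniformlyOn_of_equicontinuousAt {X α : Type*}
    [TopologicalSpace X] [LocallyCompactSpace X] [SecondCountableTopology X]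
    [UniformSpace α] [T2Space α] [IsCountablyGenerated (𝓤 α)]
    {U : Set X} (hU : IsOpen U) {F : ℕ → X → α}
    (hF : ∀ x ∈ U, EquicontinuousAt F x)
    (hFx : ∀ x ∈ U, ∃ Q, IsCompact Q ∧ ∀ n, F n x ∈ Q) :
    ∃ φ : ℕ → ℕ, StrictMono φ ∧ ∃ g : X → α,
      TendstoLocallyUniformlyOn (fun k => F (φ k)) g atTop U := by
  obtain ⟨t, ht_mono, ht, ht_exh⟩ := hU.exists_monotone_compact_exhaustion
  let 𝔖 : Set (Set X) := {K | K ⊆ U ∧ IsCompact K}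
  have : IsCountablyGenerated (𝓤 (UniformOnFun X α 𝔖)) :=
    UniformOnFun.isCountablyGenerated_uniformity 𝔖 (fun n => ⟨(ht n).2, (ht n).1⟩) ht_mono
      fun K hK => ht_exh K hK.1 hK.2
  have hcomp : IsCompact (closure (range fun n => UniformOnFun.ofFun 𝔖 (F n))) := by
    refine ArzelaAscoli.isCompact_closure_of_isClosedEmbedding (F := UniformOnFun.toFun 𝔖)
      (fun K hK => hK.2) .id (fun K hK => ?_) ?_
    · exact equicontinuousOn_iff_range.1 fun x hx => (hF x (hK.1 hx)).equicontinuousWithinAt K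
    · rintro K hK x hx
      obtain ⟨Q, hQ, hFQ⟩ := hFx x (hK.1 hx)
      exact ⟨Q, hQ, forall_mem_range.2 fun n => hFQ n⟩
  obtain ⟨g, -, φ, hφ, hlim⟩ := hcomp.isSeqCompact fun n => subset_closure (mem_range_self n)
  refine ⟨φ, hφ, UniformOnFun.toFun 𝔖 g,
    (tendstoLocallyUniformlyOn_iff_forall_isCompact hU).2 fun K hKU hK => ?_⟩
  exact UniformOnFun.tendsto_iff_tendstoUniformlyOn.1 hlim K ⟨hKU, hK⟩

theorem montel (Ω : Set ℂ) (hΩ : IsOpen Ω)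
    (F : ℕ → ℂ → ℂ) (hF : ∀ n, DifferentiableOn ℂ (F n) Ω)
    (hbd : ∀ K : Set ℂ, K ⊆ Ω → IsCompact K →
      ∃ M : ℝ, ∀ n, ∀ z ∈ K, ‖F n z‖ ≤ M) :
    ∃ φ : ℕ → ℕ, StrictMono φ ∧ ∃ g : ℂ → ℂ,
      DifferentiableOn ℂ g Ω ∧
      TendstoLocallyUniformlyOn (fun k => F (φ k)) g Filter.atTop Ω := by
  have hequi : ∀ x ∈ Ω, EquicontinuousAt F x := by
    intro x hx
    obtain ⟨R, hR, hRΩ⟩ := nhds_basis_closedBall.mem_iff.1 (hΩ.mem_nhds hx)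
    obtain ⟨M, hM⟩ := hbd _ hRΩ (isCompact_closedBall x R)
    exact Complex.equicontinuousAt_of_differentiableOn_ball_of_norm_le hR
      (fun n => (hF n).mono (ball_subset_closedBall.trans hRΩ))
      fun n z hz => hM n z (ball_subset_closedBall hz)
  have hpointwise : ∀ x ∈ Ω, ∃ Q, IsCompact Q ∧ ∀ n, F n x ∈ Q := by
    intro x hx
    obtain ⟨M, hM⟩ := hbd {x} (singleton_subset_iff.2 hx) isCompact_singleton
    exact ⟨closedBall 0 M, isCompact_closedBall 0 M,
      fun n => mem_closedBall_zero_iff.2 (hM n x rfl)⟩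
  obtain ⟨φ, hφ, g, hg⟩ :=
    exists_subseq_tendstoLocallyUniformlyOn_of_equicontinuousAt hΩ hequi hpointwise
  exact ⟨φ, hφ, g, hg.differentiableOn (Eventually.of_forall fun k => hF (φ k)) hΩ, hg⟩
end
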